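/- Let d ≥ 2 and n ≥ 1 be integers, let B = {1,…,n}^d ⊆ ℤ^d, and let u ∈ B satisfy 1 ≤ u_i ≤ ⌈n/2⌉ for every coordinate 1 ≤ i ≤ d. Then for every v ∈ B, π_u(v) ≥ (1/(2d))^d · π_u((n, n, …, n)). -/

import Mathlib

/-- A grid walk of length `t` from `v ∈ ℤ^d`: a function on `{0,…,t}` starting at `v`
whose consecutive values differ by exactly `1` in `ℓ¹`-norm. -/
def IsGridWalkD (d : ℕ) (v : Fin d → ℤ) (t : ℕ) (w : Fin (t + 1) → Fin d → ℤ) : Prop :=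
  w 0 = v ∧ ∀ j : Fin t, (∑ k : Fin d, |w j.succ k - w j.castSucc k|) = 1

/-- Membership in the box `B = {1,…,n}^d`. -/
def InBoxD (d n : ℕ) (p : Fin d → ℤ) : Prop :=
  ∀ k : Fin d, 1 ≤ p k ∧ p k ≤ (n : ℤ)

/-- `N_t(v, u)`: the number of grid walks of length `t` from `v` staying in `B \ {u}`
before time `t` and ending at `u` at time `t`. -/
noncomputable def gridHitCountD (d n : ℕ) (v u : Fin d → ℤ) (t : ℕ) : ℕ :=
  {w : Fin (t + 1) → Fin d → ℤ | IsGridWalkD d v t w ∧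
    (∀ j : Fin t, InBoxD d n (w j.castSucc) ∧ w j.castSucc ≠ u) ∧
    w (Fin.last t) = u}.ncard

/-- The potential `π_u(v) = Σ_{t ≥ 0} N_t(v,u) / (2d)^t`. -/
noncomputable def gridPotentialD (d n : ℕ) (u v : Fin d → ℤ) : ℝ :=
  ∑' t : ℕ, (gridHitCountD d n v u t : ℝ) / (2 * d) ^ t

/-!
The potential `π_u` has the mean value property on `B \ {u}`, vanishes outside `B`, equals `1` at
`u` and is bounded by `1`. Let `ρ` be the reflection of the `k`-th coordinate in `x_k = m`, where
`u_k ≤ m` and `ρ` maps the part of `B` beyond the hyperplane into `B`. Then `π_u ∘ ρ - π_u` has the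
mean value property on that part of `B` (minus `ρ u`) and is nonnegative next to it, so by the
minimum principle `π_u(z) ≤ π_u(ρ z)` beyond the hyperplane. Since `u_k ≤ ⌈n/2⌉`, this moves the
`k`-th coordinate of a point from `n` to any value of the parity of `n`, and to the other values at
the cost of one extra step, i.e. a factor `1/(2d)`. Doing this for the coordinates one at a time
carries the corner `(n, …, n)` to `v`.
-/

namespace GridPotential

variable {d n : ℕ} {u v x z : Fin d → ℤ} {t : ℕ}

def gridDir (p : Fin d × ℤˣ) : Fin d → ℤ := Pi.single p.1 (p.2 : ℤ)

lemma card_fin_prod_units_int : (Fintype.card (Fin d × ℤˣ) : ℝ) = 2 * d := by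
  simp [mul_comm]

lemma abs_gridDir_le_one (p : Fin d × ℤˣ) (i : Fin d) : |gridDir p i| ≤ 1 := by
  by_cases hi : i = p.1
  · subst hi; simp [gridDir, Int.isUnit_iff_abs_eq.mp p.2.isUnit]
  · simp [gridDir, hi]

lemma sum_abs_gridDir (p : Fin d × ℤˣ) : ∑ k, |gridDir p k| = 1 := by
  rw [Finset.sum_eq_single p.1 (fun k _ hk => by simp [gridDir, hk]) (by simp)]
  simpa [gridDir] using Int.isUnit_iff_abs_eq.mp p.2.isUnit

lemma exists_gridDir_of_sum_abs_eq_one {δ : Fin d → ℤ} (h : ∑ k, |δ k| = 1) :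
    ∃ p, δ = gridDir p := by
  obtain ⟨i, hi⟩ : ∃ i, δ i ≠ 0 := by
    by_contra! h0
    simp [h0] at h
  have hsplit := Finset.add_sum_erase Finset.univ (fun k => |δ k|) (Finset.mem_univ i)
  have hrest : ∑ k ∈ Finset.univ.erase i, |δ k| = 0 := by
    have := Finset.sum_nonneg fun k (_ : k ∈ Finset.univ.erase i) => abs_nonneg (δ k)
    have := abs_pos.mpr hi
    omega
  have hzero : ∀ k ≠ i, δ k = 0 := fun k hk => abs_eq_zero.mp <|
    (Finset.sum_eq_zero_iff_of_nonneg fun k _ => abs_nonneg (δ k)).mp hrest k (by simp [hk])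
  obtain ⟨σ, hσ⟩ : IsUnit (δ i) := Int.isUnit_iff_abs_eq.mpr (by omega)
  refine ⟨(i, σ), funext fun k => ?_⟩
  by_cases hk : k = i
  · subst hk; simp [gridDir, hσ]
  · simp [gridDir, hk, hzero k hk]

lemma gridDir_injective : Function.Injective (gridDir (d := d)) := by
  rintro ⟨i, σ⟩ ⟨j, τ⟩ h
  have hi := congrFun h i
  by_cases hij : j = i
  · subst hij; simp_all [gridDir, Units.ext_iff]
  · simp [gridDir, hij] at hi

lemma setOf_inBoxD_finite : {x : Fin d → ℤ | InBoxD d n x}.Finite :=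
  (Set.finite_Icc (1 : Fin d → ℤ) (fun _ => (n : ℤ))).subset fun _ hx =>
    ⟨fun k => (hx k).1, fun k => (hx k).2⟩

def hitWalks (d n : ℕ) (v u : Fin d → ℤ) (t : ℕ) : Set (Fin (t + 1) → Fin d → ℤ) :=
  {w | IsGridWalkD d v t w ∧ (∀ j : Fin t, InBoxD d n (w j.castSucc) ∧ w j.castSucc ≠ u) ∧
    w (Fin.last t) = u}

lemma gridHitCountD_eq_ncard : gridHitCountD d n v u t = (hitWalks d n v u t).ncard := rfl

lemma hitWalks_finite : (hitWalks d n v u t).Finite := by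
  refine (Set.Finite.pi (t := fun _ => insert u {p | InBoxD d n p}) fun _ =>
    setOf_inBoxD_finite.insert u).subset ?_
  rintro w ⟨-, hbox, hlast⟩ j -
  induction j using Fin.lastCases with
  | last => exact Or.inl hlast
  | cast j => exact Or.inr (hbox j).1

lemma cons_mem_hitWalks_succ_iff (hx : InBoxD d n x) (hxu : x ≠ u)
    (w : Fin (t + 1) → Fin d → ℤ) :
    (Fin.cons x w : Fin (t + 2) → Fin d → ℤ) ∈ hitWalks d n x u (t + 1) ↔
      (∑ k, |w 0 k - x k| = 1) ∧ w ∈ hitWalks d n (w 0) u t := by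
  simp only [hitWalks, IsGridWalkD, Set.mem_ofPred_eq, Fin.forall_fin_succ, Fin.cons_zero,
    Fin.castSucc_zero, ← Fin.succ_castSucc, ← Fin.succ_last, Fin.cons_succ]
  tauto

lemma gridHitCountD_succ (hx : InBoxD d n x) (hxu : x ≠ u) :
    gridHitCountD d n x u (t + 1) = ∑ p, gridHitCountD d n (x + gridDir p) u t := by
  let extend : (Σ p, hitWalks d n (x + gridDir p) u t) → hitWalks d n x u (t + 1) :=
    fun w => ⟨Fin.cons x w.2.1, (cons_mem_hitWalks_succ_iff hx hxu _).2 <| by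
      simp only [w.2.2.1.1, Pi.add_apply, add_sub_cancel_left]
      exact ⟨sum_abs_gridDir _, w.2.2⟩⟩
  have hbij : Function.Bijective extend := by
    refine ⟨?_, ?_⟩
    · rintro ⟨p, w, hw⟩ ⟨p', w', hw'⟩ h
      have hcons : (Fin.cons x w : Fin (t + 2) → Fin d → ℤ) = Fin.cons x w' :=
        congrArg Subtype.val h
      obtain rfl : w = w' := Fin.cons_right_injective (α := fun _ => Fin d → ℤ) x hcons
      obtain rfl : p = p' := gridDir_injective (add_left_cancel (hw.1.1.symm.trans hw'.1.1))
      rfl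
    · rintro ⟨w, hw⟩
      have hcons : Fin.cons x (Fin.tail w) = w := hw.1.1 ▸ Fin.cons_self_tail w
      rw [← hcons, cons_mem_hitWalks_succ_iff hx hxu] at hw
      obtain ⟨hstep, htail⟩ := hw
      obtain ⟨p, hp⟩ := exists_gridDir_of_sum_abs_eq_one hstep
      have hstart : Fin.tail w 0 = x + gridDir p := by
        rw [← hp]; ext k; simp
      exact ⟨⟨p, Fin.tail w, hstart ▸ htail⟩, Subtype.ext hcons⟩
  have : ∀ p, Finite (hitWalks d n (x + gridDir p) u t) := fun _ => hitWalks_finite.to_subtype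
  rw [gridHitCountD_eq_ncard, ← Nat.card_coe_set_eq, ← Nat.card_eq_of_bijective extend hbij,
    Nat.card_sigma]
  rfl

lemma gridHitCountD_zero : gridHitCountD d n x u 0 = if x = u then 1 else 0 := by
  rw [gridHitCountD_eq_ncard]
  split_ifs with hxu
  · subst hxu
    convert Set.ncard_singleton (fun _ : Fin 1 => x)
    ext w
    refine ⟨fun hw => funext fun i => Fin.fin_one_eq_zero i ▸ hw.1.1, ?_⟩
    rintro rfl
    exact ⟨⟨rfl, finZeroElim⟩, finZeroElim, rfl⟩
  · rw [Set.ncard_eq_zero hitWalks_finite, Set.eq_empty_iff_forall_notMem]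
    exact fun w hw => hxu (hw.1.1 ▸ hw.2.2)

lemma gridHitCountD_succ_eq_zero (hx : ¬(InBoxD d n x ∧ x ≠ u)) :
    gridHitCountD d n x u (t + 1) = 0 := by
  rw [gridHitCountD_eq_ncard, Set.ncard_eq_zero hitWalks_finite, Set.eq_empty_iff_forall_notMem]
  exact fun w hw => hx (hw.1.1 ▸ hw.2.1 0)

lemma sum_range_gridHitCountD_div_le_one (hd : 0 < d) (T : ℕ) (x : Fin d → ℤ) :
    ∑ t ∈ Finset.range T, (gridHitCountD d n x u t : ℝ) / (2 * d) ^ t ≤ 1 := by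
  induction T generalizing x with
  | zero => simp
  | succ T ih =>
    rw [Finset.sum_range_succ']
    by_cases hx : InBoxD d n x ∧ x ≠ u
    · calc ∑ t ∈ Finset.range T, (gridHitCountD d n x u (t + 1) : ℝ) / (2 * d) ^ (t + 1)
            + (gridHitCountD d n x u 0 : ℝ) / (2 * d) ^ 0
          = (∑ p, ∑ t ∈ Finset.range T,
              (gridHitCountD d n (x + gridDir p) u t : ℝ) / (2 * d) ^ t) / (2 * d) := by
            simp only [gridHitCountD_succ hx.1 hx.2, gridHitCountD_zero, if_neg hx.2,
              Nat.cast_sum, Nat.cast_zero, zero_div, add_zero, pow_succ, Finset.sum_div, div_div]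
            exact Finset.sum_comm
        _ ≤ (∑ _p : Fin d × ℤˣ, (1 : ℝ)) / (2 * d) := by gcongr with p; exact ih _
        _ = 1 := by
            rw [Finset.sum_const, Finset.card_univ, nsmul_one, card_fin_prod_units_int,
              div_self (by positivity)]
    · simp only [gridHitCountD_succ_eq_zero hx, gridHitCountD_zero]
      split_ifs <;> simp

lemma summable_gridHitCountD_div (hd : 0 < d) (x : Fin d → ℤ) :
    Summable fun t => (gridHitCountD d n x u t : ℝ) / (2 * d) ^ t :=
  summable_of_sum_range_le (fun _ => by positivity) (sum_range_gridHitCountD_div_le_one hd · x)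

lemma gridPotentialD_nonneg : 0 ≤ gridPotentialD d n u x :=
  tsum_nonneg fun _ => by positivity

lemma gridPotentialD_le_one (hd : 0 < d) : gridPotentialD d n u x ≤ 1 :=
  Real.tsum_le_of_sum_range_le (fun _ => by positivity) (sum_range_gridHitCountD_div_le_one hd · x)

lemma gridPotentialD_self : gridPotentialD d n u u = 1 := by
  rw [gridPotentialD, tsum_eq_single 0 fun t ht => ?_]
  · simp [gridHitCountD_zero]
  · obtain ⟨s, rfl⟩ := Nat.exists_eq_succ_of_ne_zero ht
    simp [gridHitCountD_succ_eq_zero]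

lemma gridPotentialD_eq_zero (hx : ¬InBoxD d n x) (hxu : x ≠ u) :
    gridPotentialD d n u x = 0 := by
  refine (tsum_congr fun t => ?_).trans tsum_zero
  cases t with
  | zero => simp [gridHitCountD_zero, hxu]
  | succ s => simp [gridHitCountD_succ_eq_zero, hx]

lemma gridPotentialD_eq_mean (hd : 0 < d) (hx : InBoxD d n x) (hxu : x ≠ u) :
    gridPotentialD d n u x = (∑ p, gridPotentialD d n u (x + gridDir p)) / (2 * d) := by
  rw [gridPotentialD, (summable_gridHitCountD_div hd x).tsum_eq_zero_add]
  simp only [gridHitCountD_zero, if_neg hxu, gridHitCountD_succ hx hxu, gridPotentialD]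
  rw [← Summable.tsum_finsetSum fun p _ => summable_gridHitCountD_div hd _, ← tsum_div_const]
  push_cast
  simp only [pow_succ, Finset.sum_div, div_div, zero_div, zero_add]

lemma eq_of_eq_mean_of_forall_le {f : (Fin d → ℤ) → ℝ} (hd : 0 < d)
    (hmean : f x = (∑ p, f (x + gridDir p)) / (2 * d)) (hle : ∀ p, f x ≤ f (x + gridDir p))
    (p : Fin d × ℤˣ) : f (x + gridDir p) = f x := by
  have hsum : ∑ q, (f (x + gridDir q) - f x) = 0 := by
    rw [Finset.sum_sub_distrib, Finset.sum_const, Finset.card_univ, nsmul_eq_mul,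
      card_fin_prod_units_int, hmean, mul_div_cancel₀ _ (by positivity), sub_self]
  have := (Finset.sum_eq_zero_iff_of_nonneg fun q _ => sub_nonneg.mpr (hle q)).mp hsum p
    (Finset.mem_univ p)
  linarith

lemma nonneg_of_eq_mean {f : (Fin d → ℤ) → ℝ} {R : Set (Fin d → ℤ)} (hd : 0 < d)
    (hR : R.Finite) (hmean : ∀ x ∈ R, f x = (∑ p, f (x + gridDir p)) / (2 * d))
    (hbdry : ∀ x ∈ R, ∀ p, x + gridDir p ∉ R → 0 ≤ f (x + gridDir p)) :
    ∀ x ∈ R, 0 ≤ f x := by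
  by_contra! ⟨x₀, hx₀, hneg⟩
  obtain ⟨y, hy, hmin⟩ := Set.exists_min_image R f hR ⟨x₀, hx₀⟩
  -- the negative minimum propagates along a ray, which eventually leaves the finite set `R`
  let e : Fin d × ℤˣ := (⟨0, hd⟩, 1)
  have hray : ∀ j : ℕ, y + j • gridDir e ∈ R ∧ f (y + j • gridDir e) = f y := by
    intro j
    induction j with
    | zero => simpa using hy
    | succ j ih =>
      obtain ⟨hzR, hz⟩ := ih
      have hle : ∀ p, f (y + j • gridDir e) ≤ f (y + j • gridDir e + gridDir p) := fun p => by
        by_cases hp : y + j • gridDir e + gridDir p ∈ R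
        · exact hz ▸ hmin _ hp
        · linarith [hbdry _ hzR p hp, hmin x₀ hx₀]
      have hstep := eq_of_eq_mean_of_forall_le hd (hmean _ hzR) hle e
      rw [succ_nsmul, ← add_assoc]
      refine ⟨by_contra fun hout => ?_, hstep.trans hz⟩
      linarith [hbdry _ hzR e hout, hmin x₀ hx₀]
  refine Set.infinite_of_injective_forall_mem (f := fun j : ℕ => y + j • gridDir e)
    (fun i j hij => ?_) (fun j => (hray j).1) hR
  simpa [e, gridDir] using congrFun hij ⟨0, hd⟩

def reflect (k : Fin d) (m : ℤ) (x : Fin d → ℤ) : Fin d → ℤ :=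
  Function.update x k (2 * m - x k)

def reflectDir (k : Fin d) (p : Fin d × ℤˣ) : Fin d × ℤˣ :=
  (p.1, if p.1 = k then -p.2 else p.2)

variable {k : Fin d} {m : ℤ}

lemma reflect_reflect (x : Fin d → ℤ) : reflect k m (reflect k m x) = x := by
  ext i; by_cases hi : i = k <;> simp [reflect, hi]

lemma reflect_of_eq (hx : x k = m) : reflect k m x = x := by
  ext i; by_cases hi : i = k <;> simp [reflect, hi, hx, two_mul]

lemma reflectDir_involutive : Function.Involutive (reflectDir k) := by
  rintro ⟨i, σ⟩; by_cases hi : i = k <;> simp [reflectDir, hi]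

lemma reflect_add_gridDir (x : Fin d → ℤ) (p : Fin d × ℤˣ) :
    reflect k m (x + gridDir p) = reflect k m x + gridDir (reflectDir k p) := by
  ext i
  by_cases hi : i = k <;> by_cases hp : p.1 = k <;>
    simp [reflect, reflectDir, gridDir, Pi.single_apply, hi, hp]
  ring

lemma sum_comp_reflect_add_gridDir (f : (Fin d → ℤ) → ℝ) (x : Fin d → ℤ) :
    ∑ p, f (reflect k m (x + gridDir p)) = ∑ p, f (reflect k m x + gridDir p) :=
  Fintype.sum_equiv reflectDir_involutive.toPerm _ _ fun p => by
    rw [reflect_add_gridDir]; rfl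

lemma inBoxD_reflect (hx : InBoxD d n x) (hxk : m < x k) (hm : 1 ≤ 2 * m - n) :
    InBoxD d n (reflect k m x) := by
  intro i
  by_cases hi : i = k
  · subst hi
    have := hx i
    simp only [reflect, Function.update_self]
    omega
  · simpa [reflect, hi] using hx i

lemma gridPotentialD_le_reflect (hd : 0 < d) (hu : InBoxD d n u) (huk : u k ≤ m)
    (hm : 1 ≤ 2 * m - n) (hz : m ≤ z k) :
    gridPotentialD d n u z ≤ gridPotentialD d n u (reflect k m z) := by
  set g : (Fin d → ℤ) → ℝ :=
    fun x => gridPotentialD d n u (reflect k m x) - gridPotentialD d n u x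
  set R := {x | InBoxD d n x ∧ m < x k ∧ x ≠ reflect k m u}
  have hbdry : ∀ x, m ≤ x k → x ∉ R → 0 ≤ g x := by
    intro x hxk hxR
    simp only [R, Set.mem_ofPred_eq, not_and_or, not_lt, not_not] at hxR
    rcases hxR with hx | hxk' | rfl
    · simpa [g, gridPotentialD_eq_zero hx fun h => hx (h ▸ hu)] using gridPotentialD_nonneg
    · simp [g, reflect_of_eq (le_antisymm hxk' hxk)]
    · simpa [g, reflect_reflect, gridPotentialD_self] using gridPotentialD_le_one hd
  have hmean : ∀ x ∈ R, g x = (∑ p, g (x + gridDir p)) / (2 * d) := by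
    rintro x ⟨hx, hxk, hxu⟩
    have hx' : x ≠ u := by rintro rfl; omega
    have hρx : reflect k m x ≠ u := fun h => hxu (by rw [← h, reflect_reflect])
    simp only [g, Finset.sum_sub_distrib, sub_div, sum_comp_reflect_add_gridDir]
    rw [← gridPotentialD_eq_mean hd hx hx',
      ← gridPotentialD_eq_mean hd (inBoxD_reflect hx hxk hm) hρx]
  have hnbr : ∀ x ∈ R, ∀ p : Fin d × ℤˣ, m ≤ (x + gridDir p) k := by
    rintro x ⟨-, hxk, -⟩ p
    have := abs_le.mp (abs_gridDir_le_one p k)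
    simp only [Pi.add_apply]
    omega
  by_cases hzR : z ∈ R
  · exact sub_nonneg.mp <| nonneg_of_eq_mean hd (setOf_inBoxD_finite.subset fun x hx => hx.1)
      hmean (fun x hx p hp => hbdry _ (hnbr x hx p) hp) z hzR
  · exact sub_nonneg.mp (hbdry z hz hzR)

lemma gridPotentialD_div_le_of_add_gridDir (hd : 0 < d) (hx : InBoxD d n x)
    (p : Fin d × ℤˣ) : gridPotentialD d n u (x + gridDir p) / (2 * d) ≤ gridPotentialD d n u x := by
  by_cases hxu : x = u
  · subst hxu
    rw [gridPotentialD_self]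
    exact (div_le_self gridPotentialD_nonneg (by norm_cast; omega)).trans (gridPotentialD_le_one hd)
  · rw [gridPotentialD_eq_mean hd hx hxu]
    gcongr
    exact Finset.single_le_sum (f := fun q => gridPotentialD d n u (x + gridDir q))
      (fun _ _ => gridPotentialD_nonneg) (Finset.mem_univ p)

lemma gridPotentialD_le_update_of_even (hd : 0 < d) (hu : InBoxD d n u)
    (huk : 2 * u k ≤ n + 1) (hzk : z k = n) {a : ℤ} (ha : 1 ≤ a) (han : a ≤ n)
    (hpar : Even (a + n)) :
    gridPotentialD d n u z ≤ gridPotentialD d n u (Function.update z k a) := by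
  obtain ⟨m, hm⟩ := hpar
  have hρ : reflect k m z = Function.update z k a := by rw [reflect, hzk]; congr 1; omega
  exact hρ ▸ gridPotentialD_le_reflect hd hu (by omega) (by omega) (by omega)

lemma gridPotentialD_div_le_update (hd : 0 < d) (hu : InBoxD d n u)
    (huk : 2 * u k ≤ n + 1) (hz : InBoxD d n z) (hzk : z k = n) {a : ℤ} (ha : 1 ≤ a)
    (han : a ≤ n) :
    gridPotentialD d n u z / (2 * d) ≤ gridPotentialD d n u (Function.update z k a) := by
  by_cases hpar : Even (a + n)
  · exact (div_le_self gridPotentialD_nonneg (by norm_cast; omega)).trans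
      (gridPotentialD_le_update_of_even hd hu huk hzk ha han hpar)
  have han' : a + 1 ≤ n := by
    rcases han.lt_or_eq with h | rfl
    · omega
    · exact absurd ⟨n, rfl⟩ hpar
  have hstep : Function.update z k (a + 1) = Function.update z k a + gridDir (k, 1) := by
    ext i; by_cases hi : i = k <;> simp [gridDir, hi]
  have hbox : InBoxD d n (Function.update z k a) := fun i => by
    by_cases hi : i = k
    · subst hi; simp [ha, han]
    · simpa [hi] using hz i
  calc gridPotentialD d n u z / (2 * d)
      ≤ gridPotentialD d n u (Function.update z k (a + 1)) / (2 * d) := by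
        gcongr
        exact gridPotentialD_le_update_of_even hd hu huk hzk (by omega) han'
          (by rw [add_right_comm]; exact Int.even_add_one.mpr hpar)
    _ ≤ gridPotentialD d n u (Function.update z k a) :=
        hstep ▸ gridPotentialD_div_le_of_add_gridDir hd hbox _

lemma gridPotentialD_corner_div_pow_le_piecewise (hd : 0 < d) (hn : 1 ≤ n)
    (hu : InBoxD d n u) (huk : ∀ k, 2 * u k ≤ n + 1) (hv : InBoxD d n v)
    (s : Finset (Fin d)) :
    gridPotentialD d n u (fun _ => (n : ℤ)) / (2 * d) ^ s.card ≤
      gridPotentialD d n u (s.piecewise v fun _ => (n : ℤ)) := by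
  classical
  induction s using Finset.induction_on with
  | empty => simp
  | insert k s hks ih =>
    have hbox : InBoxD d n (s.piecewise v fun _ => (n : ℤ)) := fun i => by
      by_cases hi : i ∈ s <;> simp [hi, hv i, hn]
    rw [Finset.card_insert_of_notMem hks, pow_succ, ← div_div, Finset.piecewise_insert]
    calc _ ≤ gridPotentialD d n u (s.piecewise v fun _ => (n : ℤ)) / (2 * d) := by gcongr
      _ ≤ _ := gridPotentialD_div_le_update hd hu (huk k) hbox
          (Finset.piecewise_eq_of_notMem _ _ _ hks) (hv k).1 (hv k).2

end GridPotential

/-- For integers `d ≥ 2`, `n ≥ 1`, and `u ∈ B = {1,…,n}^d` with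
`u_i ≤ ⌈n/2⌉` for all coordinates `i`, every `v ∈ B` satisfies
`π_u(v) ≥ (1/(2d))^d · π_u((n,…,n))`. -/
theorem potential_corner_is_min (d n : ℕ) (hd : 2 ≤ d) (hn : 1 ≤ n)
    (u : Fin d → ℤ) (hu : InBoxD d n u)
    (hu2 : ∀ k : Fin d, u k ≤ (((n + 1) / 2 : ℕ) : ℤ))
    (v : Fin d → ℤ) (hv : InBoxD d n v) :
    gridPotentialD d n u v ≥
      (1 / (2 * (d : ℝ))) ^ d * gridPotentialD d n u (fun _ => (n : ℤ)) := by
  have huk : ∀ k, 2 * u k ≤ n + 1 := fun k => by have := hu2 k; omega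
  have := GridPotential.gridPotentialD_corner_div_pow_le_piecewise (by omega) hn hu huk hv
    Finset.univ
  rwa [Finset.piecewise_univ, Finset.card_univ, Fintype.card_fin, ← one_div_mul_eq_div,
    ← one_div_pow] at this
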